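/- For even n ≥ 2, deleting the four vertices (n/2,1), (n/2,2), (n/2+1,2), (n/2+1,3) from the triangulated grid T_{n,3} leaves exactly two connected components, and the 180-degree rotation (i,j) ↦ (n+1-i, 4-j) restricts to a graph isomorphism between them. -/

import Mathlib

/-!
Write `k = n / 2` and order the vertices column by column, `(i, j) ↦ 3 i + j` (0-indexed).
The four deleted vertices have indices `3k - 3, 3k - 2, 3k + 1, 3k + 2`, so every edge of
`T_{n,3}` that jumps across the cut between `3k - 1` and `3k` (jumps are `1`, `3` or `4`)
has a deleted endpoint. The rotation sends index `m` to `6k - 1 - m` and so swaps the two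
sides of the cut. The left side is connected: from any of its vertices, go up the column and
then right along the top row to `(k - 1, 2)`. By symmetry the right side is connected too.
-/

/-- The underlying relation of the triangulated grid: horizontal, vertical and
(same-direction) diagonal steps.  Vertices are `0`-indexed, so `(i, j)` here
corresponds to the vertex `(i+1, j+1)` of the paper. -/
def gridRel (n m : ℕ) (a b : Fin n × Fin m) : Prop :=
  ((a.1 : ℕ) + 1 = (b.1 : ℕ) ∧ a.2 = b.2) ∨
  (a.1 = b.1 ∧ (a.2 : ℕ) + 1 = (b.2 : ℕ)) ∨
  ((a.1 : ℕ) + 1 = (b.1 : ℕ) ∧ (a.2 : ℕ) + 1 = (b.2 : ℕ))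

/-- The triangulated Cartesian product `T_{n,m} = Pₙ ⧄ Pₘ` of two paths. -/
def triGrid (n m : ℕ) : SimpleGraph (Fin n × Fin m) :=
  SimpleGraph.fromRel (gridRel n m)

/-- The four deleted vertices `(n/2,1), (n/2,2), (n/2+1,2), (n/2+1,3)` of the
paper, in our `0`-indexed coordinates. -/
def deleted10 (n : ℕ) (x : Fin n × Fin 3) : Prop :=
  ((x.1 : ℕ) + 1 = n / 2 ∧ ((x.2 : ℕ) = 0 ∨ (x.2 : ℕ) = 1)) ∨
  ((x.1 : ℕ) = n / 2 ∧ ((x.2 : ℕ) = 1 ∨ (x.2 : ℕ) = 2))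

namespace SimpleGraph

variable {V : Type*} {G : SimpleGraph V}

theorem Reachable.iff_of_forall_adj {P : V → Prop} (hP : ∀ a b, G.Adj a b → (P a ↔ P b))
    {a b : V} (h : G.Reachable a b) : P a ↔ P b := by
  obtain ⟨p⟩ := h
  induction p with
  | nil => rfl
  | cons hadj _ ih => exact (hP _ _ hadj).trans ih

theorem reachable_of_forall_eq_or_exists_adj_lt {P : V → Prop} {t : V} (μ : V → ℕ)
    (h : ∀ v, P v → v = t ∨ ∃ w, P w ∧ G.Adj v w ∧ μ w < μ v) {v : V} (hv : P v) :
    G.Reachable v t := by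
  induction v using (measure μ).wf.induction with
  | h v ih =>
    obtain rfl | ⟨w, hw, hvw, hμ⟩ := h v hv
    · rfl
    · exact hvw.reachable.trans (ih w hμ hw)

theorem card_connectedComponent_eq_two_of_swap {P : V → Prop} (σ : G ≃g G)
    (hσ : ∀ v, P (σ v) ↔ ¬P v) (hP : ∀ a b, G.Adj a b → (P a ↔ P b))
    (hconn : ∀ a b, P a → P b → G.Reachable a b) {a : V} (ha : P a) :
    Nat.card G.ConnectedComponent = 2 := by
  have hconn_compl (b c : V) (hb : ¬P b) (hc : ¬P c) : G.Reachable b c :=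
    Iso.reachable_iff.mp (hconn _ _ ((hσ b).mpr hb) ((hσ c).mpr hc))
  have ha' : ¬P (σ.symm a) := fun h => (hσ _).mp (by simpa using ha) h
  refine Nat.card_eq_two_iff.mpr
    ⟨G.connectedComponentMk a, G.connectedComponentMk (σ.symm a), ?_, ?_⟩
  · rw [Ne, ConnectedComponent.eq]
    exact fun hr => ha' ((hr.iff_of_forall_adj hP).mp ha)
  · refine Set.eq_univ_of_forall fun c => c.ind fun v => ?_
    by_cases hv : P v
    · exact Or.inl (ConnectedComponent.eq.mpr (hconn v a hv ha))
    · exact Or.inr (ConnectedComponent.eq.mpr (hconn_compl v _ hv ha'))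

end SimpleGraph

open SimpleGraph

theorem triGrid_adj_iff {n m : ℕ} {a b : Fin n × Fin m} :
    (triGrid n m).Adj a b ↔ gridRel n m a b ∨ gridRel n m b a := by
  refine ⟨fun h => h.2, fun h => ⟨?_, h⟩⟩
  rintro rfl
  simp only [gridRel] at h
  omega

def triGridRotation (n m : ℕ) : triGrid n m ≃g triGrid n m where
  toEquiv := Fin.revPerm.prodCongr Fin.revPerm
  map_rel_iff' {a b} := by
    simp only [Equiv.prodCongr_apply, Prod.map, Fin.revPerm_apply, triGrid_adj_iff, gridRel,
      Fin.ext_iff, Fin.val_rev]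
    omega

theorem deleted10_triGridRotation {n : ℕ} (heven : Even n) (x : Fin n × Fin 3) :
    deleted10 n (triGridRotation n 3 x) ↔ deleted10 n x := by
  have := Nat.even_iff.mp heven
  simp only [triGridRotation, RelIso.coe_fn_mk, Equiv.prodCongr_apply, Prod.map,
    Fin.revPerm_apply, deleted10, Fin.val_rev]
  omega

abbrev splitGraph (n : ℕ) : SimpleGraph {x | ¬deleted10 n x} :=
  (triGrid n 3).induce {x | ¬deleted10 n x}

def leftOfCut (n : ℕ) (x : Fin n × Fin 3) : Prop :=
  3 * (x.1 : ℕ) + x.2 < 3 * (n / 2)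

theorem leftOfCut_iff_of_adj {n : ℕ} (a b : {x | ¬deleted10 n x})
    (h : (splitGraph n).Adj a b) :
    leftOfCut n a ↔ leftOfCut n b := by
  obtain ⟨⟨⟨i, hi⟩, ⟨j, hj⟩⟩, ha⟩ := a
  obtain ⟨⟨⟨i', hi'⟩, ⟨j', hj'⟩⟩, hb⟩ := b
  simp only [comap_adj, Function.Embedding.subtype_apply, triGrid_adj_iff, gridRel,
    Fin.ext_iff] at h
  simp only [Set.mem_ofPred_eq, deleted10] at ha hb
  simp only [leftOfCut]
  omega

theorem leftOfCut_triGridRotation {n : ℕ} (heven : Even n) (x : Fin n × Fin 3) :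
    leftOfCut n (triGridRotation n 3 x) ↔ ¬leftOfCut n x := by
  have := Nat.even_iff.mp heven
  simp only [triGridRotation, RelIso.coe_fn_mk, Equiv.prodCongr_apply, Prod.map,
    Fin.revPerm_apply, leftOfCut, Fin.val_rev]
  omega

def cutAnchor {n : ℕ} (hn : 2 ≤ n) : {x | ¬deleted10 n x} :=
  ⟨(⟨n / 2 - 1, by omega⟩, 2), by simp only [Set.mem_ofPred_eq, deleted10]; omega⟩

theorem leftOfCut_cutAnchor {n : ℕ} (hn : 2 ≤ n) : leftOfCut n (cutAnchor hn) := by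
  simp only [cutAnchor, leftOfCut]
  omega

theorem reachable_cutAnchor_of_leftOfCut {n : ℕ} (hn : 2 ≤ n) {v : {x | ¬deleted10 n x}}
    (hv : leftOfCut n v) : (splitGraph n).Reachable v (cutAnchor hn) := by
  refine reachable_of_forall_eq_or_exists_adj_lt
    (P := fun v : {x | ¬deleted10 n x} => leftOfCut n v)
    (fun v => 3 * (n / 2) - (3 * ((v : Fin n × Fin 3).1 : ℕ) + v.1.2)) ?_ hv
  rintro ⟨⟨⟨i, hi⟩, ⟨j, hj⟩⟩, hdel⟩ hv
  simp only [Set.mem_ofPred_eq, deleted10] at hdel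
  simp only [leftOfCut] at hv
  rcases (by omega : j < 2 ∨ (j = 2 ∧ i + 2 ≤ n / 2) ∨ (j = 2 ∧ i = n / 2 - 1)) with
    hj2 | ⟨rfl, hi2⟩ | ⟨rfl, rfl⟩
  · refine Or.inr
      ⟨⟨(⟨i, hi⟩, ⟨j + 1, by omega⟩), by simp only [Set.mem_ofPred_eq, deleted10]; omega⟩,
        ?_, triGrid_adj_iff.mpr (.inl (.inr (.inl ⟨rfl, rfl⟩))), ?_⟩ <;>
    simp only [leftOfCut] <;> omega
  · refine Or.inr
      ⟨⟨(⟨i + 1, by omega⟩, 2), by simp only [Set.mem_ofPred_eq, deleted10]; omega⟩, ?_,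
        triGrid_adj_iff.mpr (.inl (.inl ⟨rfl, rfl⟩)), ?_⟩ <;>
    simp only [leftOfCut] <;> omega
  · exact Or.inl rfl

/-- For even `n ≥ 2`, deleting the vertices `(n/2,1), (n/2,2), (n/2+1,2),
(n/2+1,3)` from `T_{n,3}` leaves exactly two connected components, and the
180-degree rotation `(i,j) ↦ (n+1-i, 4-j)` restricts to a graph isomorphism
of the remaining graph that interchanges the two components. -/
theorem triGrid3_even_split (n : ℕ) (hn : 2 ≤ n) (heven : Even n) :
    Nat.card ((triGrid n 3).induce {x | ¬ deleted10 n x}).ConnectedComponent = 2 ∧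
    ∃ e : (triGrid n 3).induce {x | ¬ deleted10 n x} ≃g
          (triGrid n 3).induce {x | ¬ deleted10 n x},
      (∀ x, (e x : Fin n × Fin 3) =
        ((x : Fin n × Fin 3).1.rev, (x : Fin n × Fin 3).2.rev)) ∧
      ∀ x, ((triGrid n 3).induce {x | ¬ deleted10 n x}).connectedComponentMk (e x) ≠
        ((triGrid n 3).induce {x | ¬ deleted10 n x}).connectedComponentMk x := by
  let σ : splitGraph n ≃g splitGraph n :=
    (triGridRotation n 3).induce <|
      (triGridRotation n 3).toEquiv.bijOn fun v => not_congr (deleted10_triGridRotation heven v)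
  have hσ (v : {x | ¬deleted10 n x}) : leftOfCut n (σ v) ↔ ¬leftOfCut n v :=
    leftOfCut_triGridRotation heven v
  refine ⟨card_connectedComponent_eq_two_of_swap σ hσ leftOfCut_iff_of_adj
    (fun _ _ ha hb => (reachable_cutAnchor_of_leftOfCut hn ha).trans
      (reachable_cutAnchor_of_leftOfCut hn hb).symm) (leftOfCut_cutAnchor hn),
    σ, fun _ => rfl, fun x hx => ?_⟩
  have hside := (ConnectedComponent.eq.mp hx).iff_of_forall_adj leftOfCut_iff_of_adj
  exact iff_not_self (hside.symm.trans (hσ x))
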